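/- For every integer n ≥ 1, W_n > √(e/π) · (1 - 1/(2n))^n · (1/√n) · exp(1/(24n²) + 1/(48n³) + 1/(160n⁴) + 1/(960n⁵)). -/

import Mathlib

set_option maxHeartbeats 2000000

open Real Filter Topology

noncomputable def W (n : ℕ) : ℝ :=
  (∏ k ∈ Finset.range n, (2 * (k : ℝ) + 1)) / (∏ k ∈ Finset.range n, (2 * (k : ℝ) + 2))

section Aux
open Stirling Nat


lemma artanh_hasDeriv (t : ℝ) (h0 : -1 < t) (h1 : t < 1) :
    HasDerivAt (fun t : ℝ => log (1+t) - log (1-t)) (1/(1+t) + 1/(1-t)) t := by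
  have ha : HasDerivAt (fun t : ℝ => log (1+t)) (1/(1+t)) t := by
    have : (1:ℝ) + id t ≠ 0 := by simp only [id]; intro h; linarith
    simpa using ((hasDerivAt_id t).const_add 1).log this
  have hb : HasDerivAt (fun t : ℝ => log (1-t)) (-(1/(1-t))) t := by
    have h : HasDerivAt (fun t : ℝ => 1 - t) (-1) t := by
      exact (hasDerivAt_id t).const_sub 1
    have hne : (1:ℝ) - t ≠ 0 := by intro h; linarith
    simpa [neg_div] using h.log hne
  exact (ha.sub hb).congr_deriv (sub_neg_eq_add _ _)

lemma artanh_lb (s : ℝ) (h0 : 0 ≤ s) (h1 : s < 1) :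
    2*s + 2*s^3/3 ≤ log (1+s) - log (1-s) := by
  set F : ℝ → ℝ := fun t => log (1+t) - log (1-t) - (2*t + 2*t^3/3) with hF
  have hd : ∀ t ∈ Set.Ico (0:ℝ) 1, HasDerivAt F (1/(1+t) + 1/(1-t) - (2 + 2*t^2)) t := by
    intro t ht
    simp only [Set.mem_Ico] at ht
    exact (artanh_hasDeriv t (by linarith [ht.1]) ht.2).sub
      ((((hasDerivAt_id t).const_mul 2).add
        (((hasDerivAt_pow 3 t).const_mul 2).div_const 3)).congr_deriv (by ring))
  have hmono : MonotoneOn F (Set.Ico (0:ℝ) 1) := by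
    apply monotoneOn_of_deriv_nonneg (convex_Ico 0 1)
    · exact fun t ht => (hd t ht).continuousAt.continuousWithinAt
    · intro t ht
      rw [interior_Ico] at ht
      exact ((hd t (Set.Ioo_subset_Ico_self ht)).differentiableAt).differentiableWithinAt
    · intro t ht
      rw [interior_Ico] at ht
      rw [(hd t (Set.Ioo_subset_Ico_self ht)).deriv]
      obtain ⟨ht0, ht1⟩ := ht
      have h2 : (0:ℝ) < 1 - t := by linarith
      have h3 : (0:ℝ) < 1 + t := by linarith
      have heq : 1/(1+t) + 1/(1-t) - (2 + 2*t^2) = 2*t^4 / ((1+t)*(1-t)) := by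
        field_simp; ring
      rw [heq]
      positivity
  have h0' : F 0 = 0 := by simp [hF]
  have := hmono (Set.mem_Ico.mpr ⟨le_refl 0, one_pos⟩) (Set.mem_Ico.mpr ⟨h0, h1⟩) h0
  rw [h0'] at this
  simpa [hF] using this

lemma artanh_ub (s : ℝ) (h0 : 0 ≤ s) (h1 : s < 1) :
    log (1+s) - log (1-s) ≤ 2*s + 2*s^3/3 + 2*s^5/(5*(1-s^2)) := by
  set F : ℝ → ℝ := fun t => 2*t + 2*t^3/3 + 2*t^5/(5*(1-t^2)) - (log (1+t) - log (1-t)) with hF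
  have hd : ∀ t ∈ Set.Ico (0:ℝ) 1, HasDerivAt F
      (2 + 2*t^2 + (2*(5*t^4*(5*(1-t^2))) - 2*t^5*(5*(-2*t)))/(5*(1-t^2))^2
        - (1/(1+t) + 1/(1-t))) t := by
    intro t ht
    simp only [Set.mem_Ico] at ht
    have hne : 5*(1-t^2) ≠ 0 := by nlinarith [ht.1, ht.2]
    have hq : HasDerivAt (fun t : ℝ => 2*t^5/(5*(1-t^2)))
        ((2*(5*t^4)*(5*(1-t^2)) - 2*t^5*(5*(-2*t)))/(5*(1-t^2))^2) t := by
      have hnum : HasDerivAt (fun t : ℝ => 2*t^5) (2*(5*t^4)) t := by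
        simpa using (hasDerivAt_pow 5 t).const_mul 2
      have hden : HasDerivAt (fun t : ℝ => 5*(1-t^2)) (5*(-2*t)) t := by
        have : HasDerivAt (fun t : ℝ => 1 - t^2) (-(2*t)) t := by
          exact ((hasDerivAt_pow 2 t).const_sub 1).congr_deriv (by norm_num)
        simpa [mul_comm] using (this.const_mul 5).congr_deriv (by ring)
      exact hnum.div hden hne
    refine ((((hasDerivAt_id t).const_mul 2).add
        (((hasDerivAt_pow 3 t).const_mul 2).div_const 3)).add hq |>.sub
        (artanh_hasDeriv t (by linarith [ht.1]) ht.2)).congr_deriv ?_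
    ring
  have hmono : MonotoneOn F (Set.Ico (0:ℝ) 1) := by
    apply monotoneOn_of_deriv_nonneg (convex_Ico 0 1)
    · exact fun t ht => (hd t ht).continuousAt.continuousWithinAt
    · intro t ht
      rw [interior_Ico] at ht
      exact ((hd t (Set.Ioo_subset_Ico_self ht)).differentiableAt).differentiableWithinAt
    · intro t ht
      rw [interior_Ico] at ht
      rw [(hd t (Set.Ioo_subset_Ico_self ht)).deriv]
      obtain ⟨ht0, ht1⟩ := ht
      have h2 : (0:ℝ) < 1 - t := by linarith
      have h3 : (0:ℝ) < 1 + t := by linarith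
      have h4 : (0:ℝ) < 1 - t^2 := by nlinarith
      have heq : 2 + 2*t^2 + (2*(5*t^4*(5*(1-t^2))) - 2*t^5*(5*(-2*t)))/(5*(1-t^2))^2
          - (1/(1+t) + 1/(1-t)) = 4*t^6/(5*(1-t^2)^2) + (2/(1-t^2) - 1/(1+t) - 1/(1-t)) := by
        field_simp
        ring
      have heq2 : 2/(1-t^2) - 1/(1+t) - 1/(1-t) = 0 := by
        rw [show (1:ℝ)-t^2 = (1+t)*(1-t) by ring]
        field_simp
        ring
      rw [heq, heq2]
      positivity
  have h0' : F 0 = 0 := by norm_num [hF]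
  have := hmono (Set.mem_Ico.mpr ⟨le_refl 0, one_pos⟩) (Set.mem_Ico.mpr ⟨h0, h1⟩) h0
  rw [h0'] at this
  have : 0 ≤ 2*s + 2*s^3/3 + 2*s^5/(5*(1-s^2)) - (log (1+s) - log (1-s)) := by simpa [hF] using this
  linarith


noncomputable def cf (x : ℝ) : ℝ :=
  1 / (24 * x ^ 2) + 1 / (48 * x ^ 3) + 1 / (160 * x ^ 4) + 1 / (960 * x ^ 5)

lemma key_poly (x : ℝ) (hx : 1 ≤ x) :
    cf x - cf (x+1) + (1/2) * (2*(1/(2*x+1)) + 2*(1/(2*x+1))^3/3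
        + 2*(1/(2*x+1))^5/(5*(1-(1/(2*x+1))^2)))
      < x * (2*(1/(4*x^2+2*x-1)) + 2*(1/(4*x^2+2*x-1))^3/3) := by
  have hx0 : (0:ℝ) < x := by linarith
  have h1 : (0:ℝ) < 2*x+1 := by linarith
  have h2 : (0:ℝ) < 4*x^2+2*x-1 := by nlinarith
  have h3 : (0:ℝ) < x+1 := by linarith
  have h4 : (0:ℝ) < 1-(1/(2*x+1))^2 := by
    have : (1/(2*x+1))^2 < 1 := by
      rw [div_pow, div_lt_one (by positivity)]
      nlinarith
    linarith
  rw [← sub_pos]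
  have hm : (0:ℝ) ≤ x - 1 := by linarith
  have heq : x * (2*(1/(4*x^2+2*x-1)) + 2*(1/(4*x^2+2*x-1))^3/3)
      - (cf x - cf (x+1) + (1/2) * (2*(1/(2*x+1)) + 2*(1/(2*x+1))^3/3
        + 2*(1/(2*x+1))^5/(5*(1-(1/(2*x+1))^2))))
      = (246835 + 2202705 * (x-1) + 8882500 * (x-1)^2 + 21412470 * (x-1)^3
          + 34383145 * (x-1)^4 + 38762820 * (x-1)^5 + 31475540 * (x-1)^6
          + 18556824 * (x-1)^7 + 7887344 * (x-1)^8 + 2358144 * (x-1)^9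
          + 470976 * (x-1)^10 + 56448 * (x-1)^11 + 3072 * (x-1)^12)
        / (960 * x^5 * (x+1)^5 * (2*x+1)^3 * (4*x^2+2*x-1)^3) := by
    have hnest : 2*(1/(2*x+1))^5/(5*(1-(1/(2*x+1))^2)) = 1/(10*x*(x+1)*(2*x+1)^3) := by
      rw [div_eq_div_iff]
      · field_simp
        ring
      · positivity
      · positivity
    rw [hnest, cf, cf]
    have e1 : (2*x+1) ≠ 0 := h1.ne'
    have e2 : (4*x^2+2*x-1) ≠ 0 := h2.ne'
    have e3 : (x+1) ≠ 0 := h3.ne'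
    have e4 : (1-(1/(2*x+1))^2) ≠ 0 := h4.ne'
    have e5 : x ≠ 0 := hx0.ne'
    have e2' : x * (x * 4 + 2) - 1 ≠ 0 := by
      rw [show x * (x * 4 + 2) - 1 = 4*x^2+2*x-1 by ring]; exact e2
    field_simp
    ring
  rw [heq]
  apply _root_.div_pos
  · nlinarith [pow_nonneg hm 2, pow_nonneg hm 3, pow_nonneg hm 4, pow_nonneg hm 5,
      pow_nonneg hm 6, pow_nonneg hm 7, pow_nonneg hm 8, pow_nonneg hm 9,
      pow_nonneg hm 10, pow_nonneg hm 11, pow_nonneg hm 12]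
  · positivity


noncomputable def Rf (n : ℕ) : ℝ :=
  Real.sqrt (Real.exp 1 / π) * (1 - 1 / (2 * (n : ℝ))) ^ n * (1 / Real.sqrt n) * Real.exp (cf n)

lemma W_pos (n : ℕ) : 0 < W n := by
  apply _root_.div_pos <;> exact Finset.prod_pos (fun k _ => by positivity)

lemma W_succ (n : ℕ) : W (n + 1) = W n * ((2*(n:ℝ)+1) / (2*(n:ℝ)+2)) := by
  have h2 : (0:ℝ) < ∏ k ∈ Finset.range n, (2 * (k : ℝ) + 2) :=
    Finset.prod_pos (fun k _ => by positivity)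
  rw [W, W, Finset.prod_range_succ, Finset.prod_range_succ]
  field_simp

lemma Rf_pos (n : ℕ) (hn : 1 ≤ n) : 0 < Rf n := by
  have hn1 : (1:ℝ) ≤ (n:ℝ) := by exact_mod_cast hn
  have h1 : (0:ℝ) < 1 - 1 / (2 * (n:ℝ)) := by
    rw [sub_pos, div_lt_one (by linarith)]; linarith
  have : (0:ℝ) < (n:ℝ) := by linarith
  rw [Rf]
  positivity

lemma log_ineq (x : ℝ) (hx1 : 1 ≤ x) :
    Real.log (2*x+1) - Real.log (2*x+2) + (x*(Real.log (2*x-1) - Real.log (2*x))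
        - (1/2)*Real.log x + cf x)
      < (x+1)*(Real.log (2*x+1) - Real.log (2*x+2)) - (1/2)*Real.log (x+1) + cf (x+1) := by
  have h0 : (0:ℝ) < x := by linarith
  have h1 : (0:ℝ) < 2*x-1 := by linarith
  have h2 : (0:ℝ) < 2*x := by linarith
  have h3 : (0:ℝ) < 2*x+1 := by linarith
  have h4 : (0:ℝ) < 2*x+2 := by linarith
  have h5 : (0:ℝ) < 4*x^2+2*x-1 := by nlinarith
  set s : ℝ := 1/(4*x^2+2*x-1) with hs
  set u : ℝ := 1/(2*x+1) with hu
  have hs0 : 0 ≤ s := by positivity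
  have hs1 : s < 1 := by rw [hs, div_lt_one h5]; nlinarith
  have hu0 : 0 ≤ u := by positivity
  have hu1 : u < 1 := by rw [hu, div_lt_one h3]; linarith
  have hslog : Real.log (1+s) - Real.log (1-s)
      = Real.log (2*x+1) - Real.log (2*x+2) - Real.log (2*x-1) + Real.log (2*x) := by
    have e1 : 1 + s = (2*x)*(2*x+1)/(4*x^2+2*x-1) := by
      rw [hs, eq_div_iff h5.ne', add_mul, one_div_mul_cancel h5.ne']; ring
    have e2 : 1 - s = (2*x+2)*(2*x-1)/(4*x^2+2*x-1) := by
      rw [hs, eq_div_iff h5.ne', sub_mul, one_div_mul_cancel h5.ne']; ring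
    rw [e1, e2, Real.log_div (by positivity) h5.ne', Real.log_div (by positivity) h5.ne',
      Real.log_mul h2.ne' h3.ne', Real.log_mul h4.ne' h1.ne']
    ring
  have hulog : Real.log (1+u) - Real.log (1-u) = Real.log (x+1) - Real.log x := by
    have e1 : 1 + u = (2*x+2)/(2*x+1) := by rw [hu]; field_simp; ring
    have e2 : 1 - u = (2*x)/(2*x+1) := by rw [hu]; field_simp; ring
    have e3 : (2:ℝ)*x+2 = 2*(x+1) := by ring
    rw [e1, e2, Real.log_div (by positivity) h3.ne', Real.log_div h2.ne' h3.ne', e3,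
      Real.log_mul two_ne_zero (by positivity), Real.log_mul two_ne_zero h0.ne']
    ring
  have hA : x * (2*s + 2*s^3/3) ≤ x * (Real.log (1+s) - Real.log (1-s)) :=
    mul_le_mul_of_nonneg_left (artanh_lb s hs0 hs1) h0.le
  have hB : Real.log (1+u) - Real.log (1-u) ≤ 2*u + 2*u^3/3 + 2*u^5/(5*(1-u^2)) :=
    artanh_ub u hu0 hu1
  have hK := key_poly x hx1
  rw [← hs, ← hu] at hK
  nlinarith [hA, hB, hK, hslog, hulog]

lemma log_Rf (n : ℕ) (hn : 1 ≤ n) : Real.log (Rf n) =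
    Real.log (Real.sqrt (Real.exp 1 / π)) + n * (Real.log (2*(n:ℝ)-1) - Real.log (2*(n:ℝ)))
      - (1/2) * Real.log n + cf n := by
  have hn1 : (1:ℝ) ≤ (n:ℝ) := by exact_mod_cast hn
  have h0 : (0:ℝ) < (n:ℝ) := by linarith
  have h1 : (0:ℝ) < 2*(n:ℝ)-1 := by linarith
  have h2 : (0:ℝ) < 2*(n:ℝ) := by linarith
  have hsq : (0:ℝ) < Real.sqrt (Real.exp 1 / π) := by
    apply Real.sqrt_pos.mpr; positivity
  have hb : (1:ℝ) - 1/(2*(n:ℝ)) = (2*(n:ℝ)-1)/(2*(n:ℝ)) := by field_simp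
  rw [Rf, hb]
  rw [Real.log_mul (by positivity) (Real.exp_ne_zero _),
    Real.log_mul (by positivity) (by positivity),
    Real.log_mul hsq.ne' (by positivity),
    Real.log_pow, Real.log_div h1.ne' h2.ne', Real.log_exp, one_div,
    Real.log_inv, Real.log_sqrt h0.le]
  ring

lemma step (n : ℕ) (hn : 1 ≤ n) : Rf n * ((2*(n:ℝ)+1) / (2*(n:ℝ)+2)) < Rf (n+1) := by
  have hn1 : (1:ℝ) ≤ (n:ℝ) := by exact_mod_cast hn
  have h0 : (0:ℝ) < (n:ℝ) := by linarith
  have h3 : (0:ℝ) < 2*(n:ℝ)+1 := by linarith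
  have h4 : (0:ℝ) < 2*(n:ℝ)+2 := by linarith
  have hL : 0 < Rf n * ((2*(n:ℝ)+1) / (2*(n:ℝ)+2)) := by
    apply mul_pos (Rf_pos n hn); positivity
  rw [← Real.log_lt_log_iff hL (Rf_pos (n+1) (by omega))]
  rw [Real.log_mul (Rf_pos n hn).ne' (by positivity), Real.log_div h3.ne' h4.ne',
    log_Rf n hn, log_Rf (n+1) (by omega)]
  push_cast
  have hc1 : 2*((n:ℝ)+1)-1 = 2*(n:ℝ)+1 := by ring
  have hc2 : 2*((n:ℝ)+1) = 2*(n:ℝ)+2 := by ring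
  rw [hc1, hc2]
  have := log_ineq (n:ℝ) hn1
  linarith



lemma prod_even (n : ℕ) : (∏ k ∈ Finset.range n, (2*(k:ℝ)+2)) = 2^n * (n !) := by
  induction n with
  | zero => simp
  | succ m ih =>
    rw [Finset.prod_range_succ, ih, Nat.factorial_succ]
    push_cast
    ring

lemma prod_mul (n : ℕ) :
    (∏ k ∈ Finset.range n, (2*(k:ℝ)+1)) * (∏ k ∈ Finset.range n, (2*(k:ℝ)+2))
      = ((2*n) !) := by
  induction n with
  | zero => simp
  | succ m ih =>
    rw [Finset.prod_range_succ, Finset.prod_range_succ,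
      show 2*(m+1) = (2*m+1)+1 by ring, Nat.factorial_succ, show 2*m+1 = (2*m)+1 from rfl,
      Nat.factorial_succ]
    push_cast
    linear_combination (2*(m:ℝ)+1)*(2*(m:ℝ)+2)*ih

lemma W_eq (n : ℕ) : W n = (((2*n) !) : ℝ) / (2^n * (n !))^2 := by
  have hB : (0:ℝ) < ∏ k ∈ Finset.range n, (2 * (k : ℝ) + 2) :=
    Finset.prod_pos (fun k _ => by positivity)
  rw [W, eq_div_iff (by positivity), ← prod_mul n, ← prod_even n]
  field_simp

lemma W_sqrt (n : ℕ) (hn : 1 ≤ n) :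
    W n * Real.sqrt n = stirlingSeq (2*n) / (stirlingSeq n)^2 := by
  have hn1 : (1:ℝ) ≤ (n:ℝ) := by exact_mod_cast hn
  have h0 : (0:ℝ) < (n:ℝ) := by linarith
  have he : (0:ℝ) < Real.exp 1 := Real.exp_pos 1
  have hfac : (0:ℝ) < ((n !) : ℝ) := by exact_mod_cast Nat.factorial_pos n
  have hsn : (0:ℝ) < Real.sqrt n := Real.sqrt_pos.mpr h0
  have hs2n : (0:ℝ) < Real.sqrt (2*(n:ℝ)) := Real.sqrt_pos.mpr (by linarith)
  have hpow : (0:ℝ) < ((n:ℝ)/Real.exp 1)^n := by positivity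
  rw [stirlingSeq, stirlingSeq, W_eq]
  push_cast
  rw [show (2:ℝ)*(2*(n:ℝ)) = 4*(n:ℝ) by ring]
  rw [show Real.sqrt (4*(n:ℝ)) = 2 * Real.sqrt n by
    rw [show (4:ℝ)*(n:ℝ) = (2*Real.sqrt n)^2 by
      rw [mul_pow, Real.sq_sqrt h0.le]; ring]
    exact Real.sqrt_sq (by positivity)]
  have hA : (2:ℝ)^(2*n) = 4^n := by rw [pow_mul]; norm_num
  have hB : ((n:ℝ)/Real.exp 1)^(2*n) = (((n:ℝ)/Real.exp 1)^n)^2 := by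
    rw [show 2*n = n*2 by ring, pow_mul]
  have hC : (2*((n:ℝ)/Real.exp 1))^(2*n) = 4^n * (((n:ℝ)/Real.exp 1)^n)^2 := by
    rw [mul_pow, hA, hB]
  rw [show (2*(n:ℝ))/Real.exp 1 = 2*((n:ℝ)/Real.exp 1) by ring, hC]
  have h2n : Real.sqrt (2*(n:ℝ)) ^ 2 = 2*(n:ℝ) := Real.sq_sqrt (by positivity)
  have hsq : Real.sqrt n * Real.sqrt n = (n:ℝ) := Real.mul_self_sqrt h0.le
  field_simp
  rw [h2n, Real.sq_sqrt h0.le]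
  have h4 : ((2:ℝ)^n)^2 = 4^n := by rw [← pow_mul, mul_comm, pow_mul]; norm_num
  rw [h4]
  ring

lemma cf_tendsto : Tendsto (fun n : ℕ => cf n) atTop (𝓝 0) := by
  have h : ∀ k : ℕ, k ≠ 0 → ∀ c : ℝ, 0 < c →
      Tendsto (fun n : ℕ => 1/(c*(n:ℝ)^k)) atTop (𝓝 0) := by
    intro k hk c hc
    simp only [one_div]
    apply Tendsto.inv_tendsto_atTop
    exact Tendsto.const_mul_atTop hc ((tendsto_pow_atTop hk).comp tendsto_natCast_atTop_atTop)
  have := ((((h 2 (by norm_num) 24 (by norm_num)).add (h 3 (by norm_num) 48 (by norm_num))).add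
    (h 4 (by norm_num) 160 (by norm_num))).add (h 5 (by norm_num) 960 (by norm_num)))
  simpa [cf] using this

lemma pow_half_tendsto :
    Tendsto (fun n : ℕ => (1 - 1/(2*(n:ℝ)))^n) atTop (𝓝 (Real.exp (-(1/2)))) := by
  have := Real.tendsto_one_add_div_pow_exp (-(1/2))
  convert this using 2 with n
  rw [neg_div, div_div, ← sub_eq_add_neg]

lemma stirling_quot_tendsto :
    Tendsto (fun n : ℕ => stirlingSeq (2*n) / (stirlingSeq n)^2) atTop
      (𝓝 (Real.sqrt π / (Real.sqrt π)^2)) := by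
  have h1 : Tendsto (fun n : ℕ => stirlingSeq (2*n)) atTop (𝓝 (Real.sqrt π)) :=
    Stirling.tendsto_stirlingSeq_sqrt_pi.comp
      (Filter.tendsto_atTop_mono (fun n => by simp only [id_eq]; omega) Filter.tendsto_id)
  have h2 : Tendsto (fun n : ℕ => (stirlingSeq n)^2) atTop (𝓝 ((Real.sqrt π)^2)) :=
    Stirling.tendsto_stirlingSeq_sqrt_pi.pow 2
  exact h1.div h2 (by positivity)

lemma ratio_tendsto : Tendsto (fun n : ℕ => W n / Rf n) atTop (𝓝 1) := by
  have hπ : (0:ℝ) < π := Real.pi_pos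
  have hsπ : (0:ℝ) < Real.sqrt π := Real.sqrt_pos.mpr hπ
  have hse : (0:ℝ) < Real.sqrt (Real.exp 1) := Real.sqrt_pos.mpr (Real.exp_pos 1)
  have hexp2 : Real.exp (-(1/2)) = (Real.sqrt (Real.exp 1))⁻¹ := by
    rw [Real.exp_neg, show ((1:ℝ)/2) = 1/2 from rfl]
    congr 1
    rw [← Real.exp_half]
  have hd : Real.sqrt (Real.exp 1/π) = Real.sqrt (Real.exp 1)/Real.sqrt π :=
    Real.sqrt_div (Real.exp_pos 1).le π
  have hconst : Real.sqrt π / (Real.sqrt π)^2 /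
      (Real.sqrt (Real.exp 1/π) * Real.exp (-(1/2)) * Real.exp 0) = 1 := by
    rw [hd, hexp2, Real.exp_zero]
    field_simp
  have hmain : Tendsto (fun n : ℕ => (stirlingSeq (2*n) / (stirlingSeq n)^2) /
      (Real.sqrt (Real.exp 1/π) * (1 - 1/(2*(n:ℝ)))^n * Real.exp (cf n))) atTop (𝓝 1) := by
    have h := stirling_quot_tendsto.div
      ((tendsto_const_nhds.mul pow_half_tendsto).mul
        ((Real.continuous_exp.tendsto 0).comp cf_tendsto))
      (show (Real.sqrt (Real.exp 1/π) * Real.exp (-(1/2)) * Real.exp 0) ≠ 0 by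
        rw [hd, hexp2, Real.exp_zero]; positivity)
    rwa [hconst] at h
  apply hmain.congr'
  filter_upwards [eventually_ge_atTop 1] with n hn
  have hn1 : (1:ℝ) ≤ (n:ℝ) := by exact_mod_cast hn
  have h0 : (0:ℝ) < (n:ℝ) := by linarith
  have hsn : (0:ℝ) < Real.sqrt n := Real.sqrt_pos.mpr h0
  have hp : (0:ℝ) < 1 - 1/(2*(n:ℝ)) := by
    rw [sub_pos, div_lt_one (by linarith)]; linarith
  have hC : (0:ℝ) < Real.sqrt (Real.exp 1/π) := by positivity
  rw [← W_sqrt n hn, Rf]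
  rw [div_eq_div_iff (by positivity) (by positivity)]
  field_simp

lemma descent (m : ℕ) (hm : 1 ≤ m) : W (m+1) / Rf (m+1) < W m / Rf m := by
  rw [div_lt_div_iff₀ (Rf_pos (m+1) (by omega)) (Rf_pos m hm), W_succ m]
  calc W m * ((2*(m:ℝ)+1)/(2*(m:ℝ)+2)) * Rf m
      = W m * (Rf m * ((2*(m:ℝ)+1)/(2*(m:ℝ)+2))) := by ring
    _ < W m * Rf (m+1) := by
        exact mul_lt_mul_of_pos_left (step m hm) (W_pos m)

end Aux

theorem wallis_lower_bound (n : ℕ) (hn : 1 ≤ n) :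
    W n > Real.sqrt (Real.exp 1 / π) * (1 - 1 / (2 * (n : ℝ))) ^ n * (1 / Real.sqrt n) *
      Real.exp (1 / (24 * (n : ℝ) ^ 2) + 1 / (48 * (n : ℝ) ^ 3) + 1 / (160 * (n : ℝ) ^ 4)
        + 1 / (960 * (n : ℝ) ^ 5)) := by
  have hmono : ∀ m k : ℕ, 1 ≤ m → m ≤ k → W k / Rf k ≤ W m / Rf m := by
    intro m k hm hmk
    induction k, hmk using Nat.le_induction with
    | base => exact le_refl _
    | succ k hk ih => exact le_trans (descent k (le_trans hm hk)).le ih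
  have h1 : (1:ℝ) ≤ W (n+1) / Rf (n+1) := by
    apply le_of_tendsto ratio_tendsto
    filter_upwards [eventually_ge_atTop (n+1)] with k hk
    exact hmono (n+1) k (by omega) hk
  have h2 : 1 < W n / Rf n := lt_of_le_of_lt h1 (descent n hn)
  have h3 : Rf n < W n := (one_lt_div (Rf_pos n hn)).mp h2
  exact h3
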